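/- arXiv:1611.04724 — 4 statements merged into one kernel-verified Lean document; each statement's English description precedes it below -/
import Mathlib

section
/- Let p > 1 be real. Then for all real t with 0 ≤ t ≤ 1 and all complex numbers a, one has |a - t|^p ≥ (1 - t)^{p-1} (|a|^p - t). -/
/-!
Write `a = (1 - t) • u + t • 1` with `u = (a - t) / (1 - t)`. Convexity of `‖·‖ ^ p` gives
`‖a‖ ^ p ≤ (1 - t) ‖u‖ ^ p + t`, and `(1 - t) ^ (p - 1) * (1 - t) ‖u‖ ^ p = ‖a - t‖ ^ p`.
-/

open Real

variable {E : Type*} [SeminormedAddCommGroup E] [NormedSpace ℝ E]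

theorem norm_smul_add_smul_rpow_le {p : ℝ} (hp : 1 ≤ p) (u v : E) {s t : ℝ} (hs : 0 ≤ s)
    (ht : 0 ≤ t) (hst : s + t = 1) :
    ‖s • u + t • v‖ ^ p ≤ s * ‖u‖ ^ p + t * ‖v‖ ^ p := by
  have hnorm : ‖s • u + t • v‖ ≤ s * ‖u‖ + t * ‖v‖ := by
    simpa [norm_smul, abs_of_nonneg hs, abs_of_nonneg ht] using norm_add_le (s • u) (t • v)
  calc ‖s • u + t • v‖ ^ p ≤ (s * ‖u‖ + t * ‖v‖) ^ p :=
        rpow_le_rpow (norm_nonneg _) hnorm (by linarith)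
    _ ≤ s * ‖u‖ ^ p + t * ‖v‖ ^ p :=
        (convexOn_rpow hp).2 (norm_nonneg u) (norm_nonneg v) hs ht hst

theorem one_sub_rpow_mul_norm_rpow_sub_le {p : ℝ} (hp : 1 ≤ p) (x y : E) {t : ℝ} (ht0 : 0 ≤ t)
    (ht1 : t < 1) :
    (1 - t) ^ (p - 1) * (‖x‖ ^ p - t * ‖y‖ ^ p) ≤ ‖x - t • y‖ ^ p := by
  have hs : 0 < 1 - t := by linarith
  obtain ⟨u, hsu⟩ : ∃ u : E, (1 - t) • u = x - t • y := ⟨_, smul_inv_smul₀ hs.ne' _⟩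
  have hconv : ‖x‖ ^ p ≤ (1 - t) * ‖u‖ ^ p + t * ‖y‖ ^ p := by
    simpa [hsu] using norm_smul_add_smul_rpow_le hp u y hs.le ht0 (by ring)
  calc (1 - t) ^ (p - 1) * (‖x‖ ^ p - t * ‖y‖ ^ p) ≤ (1 - t) ^ (p - 1) * ((1 - t) * ‖u‖ ^ p) :=
        mul_le_mul_of_nonneg_left (by linarith) (rpow_nonneg hs.le _)
    _ = ((1 - t) * ‖u‖) ^ p := by
        rw [mul_rpow hs.le (norm_nonneg u), ← mul_assoc, ← rpow_add_one hs.ne', sub_add_cancel]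
    _ = ‖x - t • y‖ ^ p := by
        rw [← hsu, norm_smul, Real.norm_of_nonneg hs.le]

theorem stmt_0 (p : ℝ) (hp : 1 < p) (t : ℝ) (ht0 : 0 ≤ t) (ht1 : t ≤ 1) (a : ℂ) :
    (1 - t) ^ (p - 1) * (‖a‖ ^ p - t) ≤ ‖a - (t : ℂ)‖ ^ p := by
  rcases ht1.lt_or_eq with ht1 | rfl
  · simpa [Complex.real_smul] using one_sub_rpow_mul_norm_rpow_sub_le hp.le a 1 ht0 ht1
  · rw [sub_self, zero_rpow (by linarith), zero_mul]
    exact rpow_nonneg (norm_nonneg _) p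
end

section
/- Let N ≥ 2, 0 < s < 1, p > 1 with ps < N, and let 0 ≤ β < (N - ps)/2 and 0 < γ < (N - ps - 2β)/(p-1). Define Λ(γ) = ∫_1^∞ K(σ) (σ^γ - 1)^{p-1} (σ^{N-1-β-γ(p-1)} - σ^{β+ps-1}) dσ, where K(σ) = 2 π^{(N-1)/2}/Γ((N-1)/2) ∫_0^π sin^{N-2}(θ)/(1 - 2σ cos θ + σ²)^{(N+ps)/2} dθ. Then 0 < Λ(γ) < ∞. -/
open MeasureTheory Real intervalIntegral

lemma aux_exp (t : ℝ) (ht : 0 ≤ t) : Real.exp t - 1 ≤ t * Real.exp t := by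
  have h := Real.add_one_le_exp (-t)
  have he : Real.exp (-t) * Real.exp t = 1 := by rw [← Real.exp_add]; simp
  nlinarith [mul_le_mul_of_nonneg_right h (Real.exp_pos t).le]

lemma aux_rpow_sub_one {x c : ℝ} (hx : 1 ≤ x) (hx2 : x ≤ 2) (hc : 0 < c) :
    x ^ c - 1 ≤ c * 2 ^ c * (x - 1) := by
  have hx0 : (0:ℝ) < x := by linarith
  have hlog0 : 0 ≤ Real.log x := Real.log_nonneg hx
  have hlog : Real.log x ≤ x - 1 := Real.log_le_sub_one_of_pos hx0
  have hxc : x ^ c = Real.exp (c * Real.log x) := by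
    rw [Real.rpow_def_of_pos hx0, mul_comm]
  have h2 : x ^ c ≤ 2 ^ c := Real.rpow_le_rpow hx0.le hx2 hc.le
  have key := aux_exp (c * Real.log x) (by positivity)
  rw [← hxc] at key
  have h1 : c * Real.log x * x ^ c ≤ c * (x - 1) * 2 ^ c := by
    have hxc0 : 0 < x ^ c := Real.rpow_pos_of_pos hx0 c
    have h3 : c * Real.log x ≤ c * (x - 1) := by nlinarith
    exact mul_le_mul h3 h2 hxc0.le (by nlinarith)
  nlinarith

lemma aux_D_pos {σ : ℝ} (hσ : 1 < σ) (θ : ℝ) : 0 < 1 - 2 * σ * Real.cos θ + σ ^ 2 := by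
  nlinarith [Real.cos_le_one θ, Real.neg_one_le_cos θ, sq_nonneg (σ - Real.cos θ),
    Real.sin_sq_add_cos_sq θ, sq_nonneg (Real.sin θ)]

lemma aux_cont {σ : ℝ} (hσ : 1 < σ) (n : ℕ) {M : ℝ} (hM : 0 ≤ M) :
    Continuous (fun θ : ℝ => Real.sin θ ^ n / (1 - 2 * σ * Real.cos θ + σ ^ 2) ^ M) := by
  apply Continuous.div
  · exact (Real.continuous_sin.pow n)
  · exact (by continuity : Continuous fun θ : ℝ => 1 - 2 * σ * Real.cos θ + σ ^ 2).rpow_const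
      (fun θ => Or.inr hM)
  · exact fun θ => (Real.rpow_pos_of_pos (aux_D_pos hσ θ) M).ne'

lemma aux_K_near (n : ℕ) {ps : ℝ} (hps : 0 < ps) {σ : ℝ} (hσ1 : 1 < σ) (hσ2 : σ ≤ 2) :
    ∫ θ in (0:ℝ)..π, Real.sin θ ^ n / (1 - 2 * σ * Real.cos θ + σ ^ 2) ^ (((n:ℝ) + 2 + ps)/2)
      ≤ (1/((n:ℝ)+1) + (π^2/4) ^ (((n:ℝ) + 2 + ps)/2)) * (σ - 1) ^ (-1 - ps) := by
  set M : ℝ := ((n:ℝ) + 2 + ps)/2 with hMdef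
  have hM : 0 ≤ M := by positivity
  set a : ℝ := σ - 1 with hadef
  have ha : 0 < a := by simp [hadef]; linarith
  have ha1 : a ≤ 1 := by simp [hadef]; linarith
  have haπ : a ≤ π := le_trans ha1 (by linarith [Real.pi_gt_three])
  set F : ℝ → ℝ := fun θ => Real.sin θ ^ n / (1 - 2 * σ * Real.cos θ + σ ^ 2) ^ M with hFdef
  have hFc : Continuous F := aux_cont hσ1 n hM
  have hsplit : ∫ θ in (0:ℝ)..π, F θ = (∫ θ in (0:ℝ)..a, F θ) + ∫ θ in a..π, F θ :=
    (intervalIntegral.integral_add_adjacent_intervals (hFc.intervalIntegrable _ _)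
      (hFc.intervalIntegrable _ _)).symm
  have hI1 : ∫ θ in (0:ℝ)..a, F θ ≤ 1/((n:ℝ)+1) * a ^ (-1 - ps) := by
    have hb : ∫ θ in (0:ℝ)..a, F θ ≤ ∫ θ in (0:ℝ)..a, θ ^ n / (a^2) ^ M := by
      apply intervalIntegral.integral_mono_on ha.le (hFc.intervalIntegrable _ _)
        (((continuous_pow n).div_const _).intervalIntegrable _ _)
      rintro θ ⟨hθ0, hθa⟩
      have hsin : Real.sin θ ^ n ≤ θ ^ n :=
        pow_le_pow_left₀ (Real.sin_nonneg_of_nonneg_of_le_pi hθ0 (hθa.trans haπ)) (Real.sin_le hθ0) n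
      refine div_le_div₀ (pow_nonneg hθ0 n) hsin (Real.rpow_pos_of_pos (by positivity) M) ?_
      refine Real.rpow_le_rpow (by positivity) ?_ hM
      nlinarith [Real.cos_le_one θ]
    rw [intervalIntegral.integral_div, integral_pow, zero_pow (Nat.succ_ne_zero n), sub_zero] at hb
    have hkey : a ^ (n+1) / (a^2) ^ M = a ^ (-1 - ps) := by
      rw [← Real.rpow_natCast a (n+1), ← Real.rpow_natCast a 2, ← Real.rpow_mul ha.le,
        ← Real.rpow_sub ha]
      congr 1
      simp only [hMdef]
      push_cast
      ring
    calc ∫ θ in (0:ℝ)..a, F θ ≤ a ^ (n+1) / ((n:ℝ)+1) / (a^2) ^ M := by exact_mod_cast hb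
      _ = (a ^ (n+1) / (a^2) ^ M) / ((n:ℝ)+1) := by ring
      _ = 1/((n:ℝ)+1) * a ^ (-1 - ps) := by rw [hkey]; ring
  have hI2 : ∫ θ in a..π, F θ ≤ (π^2/4) ^ M * a ^ (-1 - ps) := by
    have hcont2 : ContinuousOn (fun θ : ℝ => (π^2/4) ^ M * θ ^ (-2 - ps)) (Set.uIcc a π) := by
      apply ContinuousOn.mul continuousOn_const
      apply ContinuousOn.rpow_const continuousOn_id
      intro θ hθ
      rw [Set.uIcc_of_le haπ] at hθ
      refine Or.inl (fun h => ?_)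
      simp only [id_eq] at h
      subst h
      exact absurd hθ.1 (by linarith)
    have hb : ∫ θ in a..π, F θ ≤ ∫ θ in a..π, (π^2/4) ^ M * θ ^ (-2 - ps) := by
      apply intervalIntegral.integral_mono_on haπ (hFc.intervalIntegrable _ _)
        (hcont2.intervalIntegrable)
      rintro θ ⟨hθa, hθπ⟩
      have hθ0 : 0 < θ := lt_of_lt_of_le ha hθa
      have hsin : Real.sin θ ^ n ≤ θ ^ n :=
        pow_le_pow_left₀ (Real.sin_nonneg_of_nonneg_of_le_pi hθ0.le hθπ) (Real.sin_le hθ0.le) n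
      have hcos : Real.cos θ ≤ 1 - 2/π^2 * θ^2 :=
        Real.cos_le_one_sub_mul_cos_sq (by rw [abs_of_pos hθ0]; exact hθπ)
      have hπ0 := Real.pi_pos
      have hD : (4/π^2) * θ^2 ≤ 1 - 2 * σ * Real.cos θ + σ^2 := by
        have h2 : 2 * σ * Real.cos θ ≤ 2 * σ * (1 - 2/π^2 * θ^2) := by
          apply mul_le_mul_of_nonneg_left hcos (by linarith)
        have hterm : 4/π^2 * θ^2 ≤ 2 * σ * (2/π^2 * θ^2) := by
          have : (0:ℝ) ≤ 2/π^2 * θ^2 := by positivity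
          have h24 : (4:ℝ)/π^2 * θ^2 = 2 * (2/π^2 * θ^2) := by ring
          rw [h24]
          exact mul_le_mul_of_nonneg_right (by linarith) this
        nlinarith [sq_nonneg (σ - 1)]
      have hstep : F θ ≤ θ ^ n / ((4/π^2) * θ^2) ^ M := by
        refine div_le_div₀ (pow_nonneg hθ0.le n) hsin (Real.rpow_pos_of_pos (by positivity) M) ?_
        exact Real.rpow_le_rpow (by positivity) hD hM
      refine hstep.trans_eq ?_
      have h4 : ((4:ℝ)/π^2) ^ M = ((π^2/4) ^ M)⁻¹ := by
        rw [← Real.inv_rpow (by positivity), inv_div]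
      rw [Real.mul_rpow (by positivity) (by positivity), h4,
        ← Real.rpow_natCast θ 2, ← Real.rpow_mul hθ0.le, ← Real.rpow_natCast θ n,
        div_mul_eq_div_div, div_eq_mul_inv _ ((π ^ 2 / 4) ^ M)⁻¹, inv_inv,
        mul_comm, mul_div_assoc, ← Real.rpow_sub hθ0]
      congr 2
      simp only [hMdef]
      push_cast
      ring
    refine hb.trans ?_
    rw [intervalIntegral.integral_const_mul]
    apply mul_le_mul_of_nonneg_left _ (by positivity)
    rw [integral_rpow (Or.inr ⟨by intro h; nlinarith, by
      rw [Set.uIcc_of_le haπ]; rintro ⟨h1, h2⟩; linarith⟩)]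
    have h1 : -2 - ps + 1 = -1 - ps := by ring
    rw [h1]
    rw [div_le_iff_of_neg (by linarith : (-1 : ℝ) - ps < 0)]
    have hπp : (0:ℝ) ≤ π ^ (-1 - ps) := Real.rpow_nonneg Real.pi_pos.le _
    have hap : (0:ℝ) ≤ a ^ (-1 - ps) := Real.rpow_nonneg ha.le _
    nlinarith
  calc ∫ θ in (0:ℝ)..π, F θ = (∫ θ in (0:ℝ)..a, F θ) + ∫ θ in a..π, F θ := hsplit
    _ ≤ 1/((n:ℝ)+1) * a ^ (-1 - ps) + (π^2/4) ^ M * a ^ (-1 - ps) := add_le_add hI1 hI2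
    _ = (1/((n:ℝ)+1) + (π^2/4) ^ M) * a ^ (-1 - ps) := by ring

lemma aux_K_far (n : ℕ) {ps : ℝ} (hps : 0 < ps) {σ : ℝ} (hσ : 2 ≤ σ) :
    ∫ θ in (0:ℝ)..π, Real.sin θ ^ n / (1 - 2 * σ * Real.cos θ + σ ^ 2) ^ (((n:ℝ) + 2 + ps)/2)
      ≤ π * (σ/2) ^ (-((n:ℝ) + 2 + ps)) := by
  set M : ℝ := ((n:ℝ) + 2 + ps)/2 with hMdef
  have hM : 0 ≤ M := by positivity
  have hσ1 : (1:ℝ) < σ := by linarith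
  have hσ2 : (0:ℝ) < σ/2 := by linarith
  have hb : ∫ θ in (0:ℝ)..π, Real.sin θ ^ n / (1 - 2 * σ * Real.cos θ + σ ^ 2) ^ M
      ≤ ∫ _ in (0:ℝ)..π, (σ/2) ^ (-((n:ℝ) + 2 + ps)) := by
    apply intervalIntegral.integral_mono_on Real.pi_pos.le
      ((aux_cont hσ1 n hM).intervalIntegrable _ _) (intervalIntegrable_const)
    rintro θ ⟨hθ0, hθπ⟩
    have hsin0 : 0 ≤ Real.sin θ := Real.sin_nonneg_of_nonneg_of_le_pi hθ0 hθπ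
    have hsin : Real.sin θ ^ n ≤ 1 := pow_le_one₀ hsin0 (Real.sin_le_one θ)
    have hD : ((σ/2)^2 : ℝ) ≤ 1 - 2 * σ * Real.cos θ + σ^2 := by
      nlinarith [Real.cos_le_one θ]
    have key : ((σ/2)^2 : ℝ) ^ M = (σ/2) ^ ((n:ℝ) + 2 + ps) := by
      rw [← Real.rpow_natCast (σ/2) 2, ← Real.rpow_mul hσ2.le]
      congr 1
      simp only [hMdef]
      push_cast; ring
    calc Real.sin θ ^ n / (1 - 2 * σ * Real.cos θ + σ ^ 2) ^ M
        ≤ 1 / ((σ/2)^2) ^ M :=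
          div_le_div₀ zero_le_one hsin (Real.rpow_pos_of_pos (by positivity) M)
            (Real.rpow_le_rpow (by positivity) hD hM)
      _ = (σ/2) ^ (-((n:ℝ) + 2 + ps)) := by
          rw [key, Real.rpow_neg hσ2.le, one_div]
  simpa using hb

theorem stmt_2 (N : ℕ) (hN : 2 ≤ N) (s p β γ : ℝ) (hs0 : 0 < s) (hs1 : s < 1)
    (hp : 1 < p) (hps : p * s < N) (hβ0 : 0 ≤ β) (hβ : β < ((N : ℝ) - p * s) / 2)
    (hγ0 : 0 < γ) (hγ : γ < ((N : ℝ) - p * s - 2 * β) / (p - 1)) (K : ℝ → ℝ)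
    (hK : ∀ σ : ℝ,
      K σ = 2 * Real.pi ^ (((N : ℝ) - 1) / 2) / Real.Gamma (((N : ℝ) - 1) / 2) *
        ∫ θ in (0:ℝ)..Real.pi,
          Real.sin θ ^ (N - 2) / (1 - 2 * σ * Real.cos θ + σ ^ 2) ^ (((N : ℝ) + p * s) / 2)) :
    IntegrableOn
      (fun σ : ℝ => K σ * (σ ^ γ - 1) ^ (p - 1) *
        (σ ^ ((N : ℝ) - 1 - β - γ * (p - 1)) - σ ^ (β + p * s - 1))) (Set.Ioi 1) ∧
    0 < ∫ σ in Set.Ioi (1:ℝ), K σ * (σ ^ γ - 1) ^ (p - 1) *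
        (σ ^ ((N : ℝ) - 1 - β - γ * (p - 1)) - σ ^ (β + p * s - 1)) := by
  have hp0 : (0:ℝ) < p := by linarith
  have hp1 : (0:ℝ) < p - 1 := by linarith
  have hps0 : 0 < p * s := mul_pos hp0 hs0
  have hpsp : p * s < p := by nlinarith
  set n : ℕ := N - 2 with hn
  have hncast : ((n : ℕ) : ℝ) = (N : ℝ) - 2 := by
    rw [hn, Nat.cast_sub hN]; norm_num
  have hN2 : (2:ℝ) ≤ (N:ℝ) := by exact_mod_cast hN
  have hexp : ((N:ℝ) + p * s)/2 = (((n:ℝ)) + 2 + p * s)/2 := by rw [hncast]; ring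
  set M : ℝ := ((n:ℝ) + 2 + p * s)/2 with hM
  have hM0 : 0 ≤ M := by rw [hM]; positivity
  set C : ℝ := 2 * Real.pi ^ (((N : ℝ) - 1) / 2) / Real.Gamma (((N : ℝ) - 1) / 2) with hCdef
  have hC : 0 < C := by
    rw [hCdef]
    apply div_pos (by positivity)
    exact Real.Gamma_pos_of_pos (by linarith)
  have hKform : ∀ σ : ℝ, K σ = C * ∫ θ in (0:ℝ)..π,
      Real.sin θ ^ n / (1 - 2 * σ * Real.cos θ + σ ^ 2) ^ M := by
    intro σ
    rw [hK σ]
    simp only [hexp, hM, hn]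
  set A : ℝ := (N:ℝ) - 1 - β - γ * (p - 1) with hA
  set B : ℝ := β + p * s - 1 with hB
  have hγ' : γ * (p - 1) < (N:ℝ) - p * s - 2 * β := (lt_div_iff₀ hp1).mp hγ
  have hAB : B < A := by rw [hA, hB]; linarith
  have hABpos : 0 < A - B := by linarith
  -- positivity of K
  have hKpos : ∀ σ : ℝ, 1 < σ → 0 < K σ := by
    intro σ hσ
    rw [hKform σ]
    apply mul_pos hC
    apply intervalIntegral.intervalIntegral_pos_of_pos_on
      ((aux_cont hσ n hM0).intervalIntegrable _ _)
    · intro θ hθ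
      exact div_pos (pow_pos (Real.sin_pos_of_pos_of_lt_pi hθ.1 hθ.2) n)
        (Real.rpow_pos_of_pos (aux_D_pos hσ θ) M)
    · exact Real.pi_pos
  have hfpos : ∀ σ : ℝ, 1 < σ →
      0 < K σ * (σ ^ γ - 1) ^ (p - 1) * (σ ^ A - σ ^ B) := by
    intro σ hσ
    have hσ0 : (0:ℝ) < σ := by linarith
    have h1 : (1:ℝ) < σ ^ γ :=
      (Real.one_lt_rpow_iff_of_pos hσ0).mpr (Or.inl ⟨hσ, hγ0⟩)
    exact mul_pos (mul_pos (hKpos σ hσ) (Real.rpow_pos_of_pos (by linarith) _))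
      (sub_pos.mpr (Real.rpow_lt_rpow_of_exponent_lt hσ hAB))
  -- measurability
  have hmeas : Measurable (fun σ : ℝ => K σ * (σ ^ γ - 1) ^ (p - 1) * (σ ^ A - σ ^ B)) := by
    have hKm : Measurable K := by
      have hrw : K = fun σ : ℝ => C * ∫ θ in Set.Ioc (0:ℝ) π,
          Real.sin θ ^ n / (1 - 2 * σ * Real.cos θ + σ ^ 2) ^ M := by
        funext σ
        rw [hKform σ, intervalIntegral.integral_of_le Real.pi_pos.le]
      rw [hrw]
      apply Measurable.const_mul
      have hjm : StronglyMeasurable (fun q : ℝ × ℝ =>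
          Real.sin q.2 ^ n / (1 - 2 * q.1 * Real.cos q.2 + q.1 ^ 2) ^ M) := by
        apply Measurable.stronglyMeasurable
        exact ((Real.measurable_sin.comp measurable_snd).pow_const n).div
          ((((measurable_const.sub ((measurable_const.mul measurable_fst).mul
            (Real.measurable_cos.comp measurable_snd))).add
            (measurable_fst.pow_const 2))).pow measurable_const)
      exact hjm.integral_prod_right'.measurable
    exact (hKm.mul (((measurable_id.pow measurable_const).sub measurable_const).pow
      measurable_const)).mul (((measurable_id.pow measurable_const)).sub
      ((measurable_id.pow measurable_const)))
  have hcollapse : ∀ u : ℝ, 0 < u → u ^ (-1 - p * s) * u ^ (p - 1) * u = u ^ (p - 1 - p * s) := by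
    intro u hu
    rw [← Real.rpow_add hu]
    nth_rewrite 2 [← Real.rpow_one u]
    rw [← Real.rpow_add hu]
    congr 1
    ring
  -- integrability
  have hint : IntegrableOn (fun σ : ℝ => K σ * (σ ^ γ - 1) ^ (p - 1) * (σ ^ A - σ ^ B))
      (Set.Ioi 1) := by
    have hIoi : Set.Ioc (1:ℝ) 2 ∪ Set.Ioi 2 = Set.Ioi 1 :=
      Set.Ioc_union_Ioi_eq_Ioi (by norm_num)
    rw [← hIoi]
    apply IntegrableOn.union
    · -- near part on Ioc 1 2
      set c₁ : ℝ := C * (1/((n:ℝ)+1) + (π^2/4) ^ M) with hc₁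
      set c₂ : ℝ := (γ * 2 ^ γ) ^ (p - 1) with hc₂
      set c₃ : ℝ := 2 ^ |B| * ((A - B) * 2 ^ (A - B)) with hc₃
      have hc₁0 : 0 ≤ c₁ := by
        rw [hc₁]; apply mul_nonneg hC.le; positivity
      have hc₂0 : 0 ≤ c₂ := Real.rpow_nonneg (by positivity) _
      have hc₃0 : 0 ≤ c₃ := by
        rw [hc₃]
        exact mul_nonneg (Real.rpow_nonneg (by norm_num) _)
          (mul_nonneg hABpos.le (Real.rpow_nonneg (by norm_num) _))
      apply Integrable.mono' (g := fun σ : ℝ => c₁ * c₂ * c₃ * (σ - 1) ^ (p - 1 - p * s))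
      · have h0 : IntervalIntegrable (fun x : ℝ => x ^ (p - 1 - p * s)) volume 0 1 :=
          intervalIntegral.intervalIntegrable_rpow' (by linarith)
        have h1 := (h0.comp_sub_right 1).const_mul (c₁ * c₂ * c₃)
        norm_num at h1
        exact h1.1
      · exact hmeas.aestronglyMeasurable.restrict
      · rw [ae_restrict_iff' measurableSet_Ioc]
        refine ae_of_all _ ?_
        rintro σ ⟨hσ1, hσ2⟩
        have hσ0 : (0:ℝ) < σ := by linarith
        have hu : (0:ℝ) < σ - 1 := by linarith
        rw [Real.norm_eq_abs, abs_of_pos (hfpos σ hσ1)]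
        have bound1 : K σ ≤ c₁ * (σ - 1) ^ (-1 - p * s) := by
          rw [hKform σ, hc₁, mul_assoc]
          exact mul_le_mul_of_nonneg_left (aux_K_near n hps0 hσ1 hσ2) hC.le
        have hX0 : (0:ℝ) ≤ σ ^ γ - 1 := by
          have : (1:ℝ) ≤ σ ^ γ := Real.one_le_rpow hσ1.le hγ0.le
          linarith
        have bound2 : (σ ^ γ - 1) ^ (p - 1) ≤ c₂ * (σ - 1) ^ (p - 1) := by
          have h := aux_rpow_sub_one hσ1.le hσ2 hγ0
          calc (σ ^ γ - 1) ^ (p - 1) ≤ (γ * 2 ^ γ * (σ - 1)) ^ (p - 1) :=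
                Real.rpow_le_rpow hX0 h hp1.le
            _ = c₂ * (σ - 1) ^ (p - 1) := by
                rw [hc₂, ← Real.mul_rpow (by positivity) hu.le]
        have hσB : σ ^ B ≤ 2 ^ |B| := by
          calc σ ^ B ≤ σ ^ |B| :=
                Real.rpow_le_rpow_of_exponent_le hσ1.le (le_abs_self B)
            _ ≤ 2 ^ |B| := Real.rpow_le_rpow hσ0.le hσ2 (abs_nonneg B)
        have hYsplit : σ ^ A - σ ^ B = σ ^ B * (σ ^ (A - B) - 1) := by
          rw [mul_sub, mul_one, ← Real.rpow_add hσ0]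
          ring_nf
        have hone_le : (1:ℝ) ≤ σ ^ (A - B) := Real.one_le_rpow hσ1.le hABpos.le
        have bound3 : σ ^ A - σ ^ B ≤ c₃ * (σ - 1) := by
          rw [hYsplit, hc₃]
          calc σ ^ B * (σ ^ (A - B) - 1)
              ≤ 2 ^ |B| * ((A - B) * 2 ^ (A - B) * (σ - 1)) := by
                apply mul_le_mul hσB (aux_rpow_sub_one hσ1.le hσ2 hABpos)
                  (by linarith) (Real.rpow_nonneg (by norm_num) _)
            _ = 2 ^ |B| * ((A - B) * 2 ^ (A - B)) * (σ - 1) := by ring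
        have hKnn : 0 ≤ K σ := (hKpos σ hσ1).le
        have hXnn : 0 ≤ (σ ^ γ - 1) ^ (p - 1) := Real.rpow_nonneg hX0 _
        have hYnn : 0 ≤ σ ^ A - σ ^ B := by
          have := Real.rpow_lt_rpow_of_exponent_lt hσ1 hAB; linarith
        calc K σ * (σ ^ γ - 1) ^ (p - 1) * (σ ^ A - σ ^ B)
            ≤ (c₁ * (σ - 1) ^ (-1 - p * s)) * (c₂ * (σ - 1) ^ (p - 1)) * (c₃ * (σ - 1)) := by
              apply mul_le_mul _ bound3 hYnn
              · exact mul_nonneg (mul_nonneg hc₁0 (Real.rpow_nonneg hu.le _))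
                  (mul_nonneg hc₂0 (Real.rpow_nonneg hu.le _))
              · exact mul_le_mul bound1 bound2 hXnn
                  (mul_nonneg hc₁0 (Real.rpow_nonneg hu.le _))
          _ = c₁ * c₂ * c₃ * ((σ - 1) ^ (-1 - p * s) * (σ - 1) ^ (p - 1) * (σ - 1)) := by ring
          _ = c₁ * c₂ * c₃ * (σ - 1) ^ (p - 1 - p * s) := by rw [hcollapse _ hu]
    · -- far part on Ioi 2
      set E : ℝ := (n:ℝ) + 2 + p * s with hE
      have hE0 : 0 < E := by rw [hE]; positivity
      set c₄ : ℝ := C * π * 2 ^ E with hc₄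
      apply Integrable.mono' (g := fun σ : ℝ => c₄ * σ ^ (-1 - β - p * s))
      · exact (integrableOn_Ioi_rpow_of_lt (by linarith) (by norm_num : (0:ℝ) < 2)).const_mul c₄
      · exact hmeas.aestronglyMeasurable.restrict
      · rw [ae_restrict_iff' measurableSet_Ioi]
        refine ae_of_all _ ?_
        intro σ hσ2
        simp only [Set.mem_Ioi] at hσ2
        have hσ1 : (1:ℝ) < σ := by linarith
        have hσ0 : (0:ℝ) < σ := by linarith
        rw [Real.norm_eq_abs, abs_of_pos (hfpos σ hσ1)]
        have bound1 : K σ ≤ C * π * (2 ^ E * σ ^ (-E)) := by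
          rw [hKform σ]
          have h := aux_K_far n hps0 hσ2.le
          have hdiv : (σ/2) ^ (-E) = 2 ^ E * σ ^ (-E) := by
            rw [Real.div_rpow hσ0.le (by norm_num : (0:ℝ) ≤ 2), Real.rpow_neg (by norm_num : (0:ℝ) ≤ 2),
              div_eq_mul_inv, inv_inv, mul_comm]
          calc C * ∫ θ in (0:ℝ)..π, Real.sin θ ^ n / (1 - 2*σ*Real.cos θ + σ^2) ^ M
              ≤ C * (π * (σ/2) ^ (-E)) := mul_le_mul_of_nonneg_left h hC.le
            _ = C * π * (2 ^ E * σ ^ (-E)) := by rw [hdiv]; ring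
        have hX0 : (0:ℝ) ≤ σ ^ γ - 1 := by
          have : (1:ℝ) ≤ σ ^ γ := Real.one_le_rpow hσ1.le hγ0.le
          linarith
        have bound2 : (σ ^ γ - 1) ^ (p - 1) ≤ σ ^ (γ * (p - 1)) := by
          calc (σ ^ γ - 1) ^ (p - 1) ≤ (σ ^ γ) ^ (p - 1) :=
                Real.rpow_le_rpow hX0 (by linarith [Real.rpow_pos_of_pos hσ0 γ]) hp1.le
            _ = σ ^ (γ * (p - 1)) := by rw [← Real.rpow_mul hσ0.le]
        have bound3 : σ ^ A - σ ^ B ≤ σ ^ A :=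
          sub_le_self _ (Real.rpow_nonneg hσ0.le _)
        have hXnn : 0 ≤ (σ ^ γ - 1) ^ (p - 1) := Real.rpow_nonneg hX0 _
        have hYnn : 0 ≤ σ ^ A - σ ^ B := by
          have := Real.rpow_lt_rpow_of_exponent_lt hσ1 hAB; linarith
        have hKnn : 0 ≤ K σ := (hKpos σ hσ1).le
        have hexps : σ ^ (-E) * σ ^ (γ * (p - 1)) * σ ^ A = σ ^ (-1 - β - p * s) := by
          rw [← Real.rpow_add hσ0, ← Real.rpow_add hσ0]
          congr 1
          rw [hE, hA, hncast]
          ring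
        calc K σ * (σ ^ γ - 1) ^ (p - 1) * (σ ^ A - σ ^ B)
            ≤ (C * π * (2 ^ E * σ ^ (-E))) * (σ ^ (γ * (p - 1))) * (σ ^ A) := by
              apply mul_le_mul _ bound3 hYnn
              · exact mul_nonneg (mul_nonneg (mul_nonneg hC.le Real.pi_pos.le)
                  (mul_nonneg (Real.rpow_nonneg (by norm_num) _) (Real.rpow_nonneg hσ0.le _)))
                  (Real.rpow_nonneg hσ0.le _)
              · exact mul_le_mul bound1 bound2 hXnn
                  (mul_nonneg (mul_nonneg hC.le Real.pi_pos.le)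
                    (mul_nonneg (Real.rpow_nonneg (by norm_num) _) (Real.rpow_nonneg hσ0.le _)))
          _ = c₄ * (σ ^ (-E) * σ ^ (γ * (p - 1)) * σ ^ A) := by rw [hc₄]; ring
          _ = c₄ * σ ^ (-1 - β - p * s) := by rw [hexps]
  refine ⟨hint, ?_⟩
  rw [setIntegral_pos_iff_support_of_nonneg_ae]
  · have hsub : Set.Ioi (1:ℝ) ⊆ Function.support
        (fun σ : ℝ => K σ * (σ ^ γ - 1) ^ (p - 1) * (σ ^ A - σ ^ B)) :=
      fun σ hσ => (hfpos σ hσ).ne'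
    rw [Set.inter_eq_self_of_subset_right hsub, Real.volume_Ioi]
    exact ENNReal.zero_lt_top
  · exact (ae_restrict_iff' measurableSet_Ioi).mpr (ae_of_all _ fun σ hσ => (hfpos σ hσ).le)
  · exact hint
end

section
/- Let p ≥ 2, w(x), w(y) > 0 and u(x), u(y) be real numbers. Define Φ(x,y) = |u(x)-u(y)|^p - (|u(x)/w(x)|^p w(x) - |u(y)/w(y)|^p w(y)) |w(x)-w(y)|^{p-2}(w(x)-w(y)). Then Φ(x,y) ≥ 0. -/
/-!
Write `c = w(x)`, `d = w(y)` and, by symmetry, assume `d < c`. Then `Φ ≥ 0` says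
`(|a|^p / c^(p-1) - |b|^p / d^(p-1)) (c - d)^(p-1) ≤ |a - b|^p`. Splitting `a = (a - b) + b`
and `c = (c - d) + d`, this is Radon's inequality
`(x + y)^p / (s + t)^(p-1) ≤ x^p / s^(p-1) + y^p / t^(p-1)`, i.e. convexity of `t ↦ t^p`
applied at `x/s`, `y/t` with weights `s/(s+t)`, `t/(s+t)`.
-/

open Real

lemma div_rpow_mul_self {p z r : ℝ} (hz : 0 ≤ z) (hr : 0 < r) :
    (z / r) ^ p * r = z ^ p / r ^ (p - 1) := by
  rw [div_rpow hz hr.le, rpow_sub_one hr.ne']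
  field_simp

lemma rpow_add_div_rpow_add_le {p x y s t : ℝ} (hp : 1 ≤ p) (hx : 0 ≤ x) (hy : 0 ≤ y)
    (hs : 0 < s) (ht : 0 < t) :
    (x + y) ^ p / (s + t) ^ (p - 1) ≤ x ^ p / s ^ (p - 1) + y ^ p / t ^ (p - 1) := by
  have hst : 0 < s + t := add_pos hs ht
  have hconv := (convexOn_rpow hp).2 (div_nonneg hx hs.le) (div_nonneg hy ht.le)
    (div_pos hs hst).le (div_pos ht hst).le (by field_simp)
  have hmean : s / (s + t) * (x / s) + t / (s + t) * (y / t) = (x + y) / (s + t) := by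
    field_simp
  simp only [smul_eq_mul, hmean] at hconv
  rw [← div_rpow_mul_self (add_nonneg hx hy) hst, ← div_rpow_mul_self hx hs,
    ← div_rpow_mul_self hy ht]
  calc ((x + y) / (s + t)) ^ p * (s + t)
      ≤ (s / (s + t) * (x / s) ^ p + t / (s + t) * (y / t) ^ p) * (s + t) := by gcongr
    _ = (x / s) ^ p * s + (y / t) ^ p * t := by field_simp

lemma picone_pointwise_of_lt {p a b c d : ℝ} (hp : 1 ≤ p) (hd : 0 < d) (hdc : d < c) :
    (|a| ^ p / c ^ (p - 1) - |b| ^ p / d ^ (p - 1)) * (c - d) ^ (p - 1) ≤ |a - b| ^ p := by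
  have hcd : 0 < c - d := sub_pos.2 hdc
  have hpos : 0 < (c - d) ^ (p - 1) := rpow_pos_of_pos hcd _
  have hc : 0 < c := hd.trans hdc
  have hradon : |a| ^ p / c ^ (p - 1) ≤ |a - b| ^ p / (c - d) ^ (p - 1) + |b| ^ p / d ^ (p - 1) :=
    calc |a| ^ p / c ^ (p - 1) ≤ (|a - b| + |b|) ^ p / ((c - d) + d) ^ (p - 1) := by
          rw [sub_add_cancel]
          gcongr
          exact sub_le_iff_le_add.1 (abs_sub_abs_le_abs_sub a b)
      _ ≤ _ := rpow_add_div_rpow_add_le hp (abs_nonneg _) (abs_nonneg _) hcd hd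
  calc (|a| ^ p / c ^ (p - 1) - |b| ^ p / d ^ (p - 1)) * (c - d) ^ (p - 1)
      ≤ |a - b| ^ p / (c - d) ^ (p - 1) * (c - d) ^ (p - 1) := by gcongr; linarith
    _ = |a - b| ^ p := div_mul_cancel₀ _ hpos.ne'

theorem stmt_10 (p : ℝ) (hp : 2 ≤ p) (ux uy wx wy : ℝ) (hwx : 0 < wx) (hwy : 0 < wy) :
    0 ≤ |ux - uy| ^ p -
      (|ux / wx| ^ p * wx - |uy / wy| ^ p * wy) * |wx - wy| ^ (p - 2) * (wx - wy) := by
  wlog hle : wy ≤ wx generalizing ux uy wx wy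
  · have := this uy ux wy wx hwy hwx (not_le.1 hle).le
    rw [abs_sub_comm uy, abs_sub_comm wy] at this
    linarith
  rcases hle.eq_or_lt with heq | hlt
  · rw [heq, sub_self, mul_zero, sub_zero]
    positivity
  have hsign : |wx - wy| ^ (p - 2) * (wx - wy) = (wx - wy) ^ (p - 1) := by
    rw [abs_of_pos (sub_pos.2 hlt), show p - 1 = p - 2 + 1 by ring,
      rpow_add_one (sub_pos.2 hlt).ne']
  rw [abs_div, abs_div, abs_of_pos hwx, abs_of_pos hwy, div_rpow_mul_self (abs_nonneg _) hwx,
    div_rpow_mul_self (abs_nonneg _) hwy, mul_assoc, hsign, sub_nonneg]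
  exact picone_pointwise_of_lt (by linarith) hwy hlt
end

section
/- Let p > 1, 0 < s < 1, N > ps, and β < −ps. Then C_0^∞(ℝ^N) is not contained in X^{s,p,β}(ℝ^N); specifically, for any φ ∈ C_0^∞(B_4(0)) with 0 ≤ φ ≤ 1 and φ = 1 on B_1(0), the integral ∫_{ℝ^N}∫_{ℝ^N} |φ(x)-φ(y)|^p / (|x-y|^{N+ps} |x|^β |y|^β) dx dy is infinite. -/
open MeasureTheory Real ENNReal Metric Set

lemma aux_div (N : ℕ) (hN : 0 < N) :
    ∫⁻ y in (Metric.closedBall (0 : EuclideanSpace ℝ (Fin N)) 4)ᶜ,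
      ENNReal.ofReal (‖y‖ ^ (-(N : ℝ))) = ⊤ := by
  set E := EuclideanSpace ℝ (Fin N)
  have : Nonempty (Fin N) := ⟨⟨0, hN⟩⟩
  set R : ℕ → ℝ := fun k => 2 ^ (k + 2) with hR
  have hRpos : ∀ k, (0:ℝ) < R k := fun k => by positivity
  have hR4 : ∀ k, (4:ℝ) ≤ R k := by
    intro k
    calc (4:ℝ) = 2 ^ 2 := by norm_num
    _ ≤ 2 ^ (k + 2) := by
      apply pow_le_pow_right₀ (by norm_num); omega
  have hRmono : ∀ j k, j ≤ k → R j ≤ R k := fun j k h =>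
    pow_le_pow_right₀ (by norm_num) (by omega)
  set A : ℕ → Set E := fun k => Metric.closedBall 0 (R (k+1)) \ Metric.closedBall 0 (R k) with hA
  have hmemA : ∀ k y, y ∈ A k ↔ (R k < ‖y‖ ∧ ‖y‖ ≤ R (k+1)) := by
    intro k y
    show y ∈ _ \ _ ↔ _
    rw [Set.mem_diff, mem_closedBall_zero_iff, mem_closedBall_zero_iff, not_le, and_comm]
  have hAm : ∀ k, MeasurableSet (A k) :=
    fun k => measurableSet_closedBall.diff measurableSet_closedBall
  have hdisj : Pairwise (Function.onFun Disjoint A) := by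
    intro j k hjk
    show Disjoint (A j) (A k)
    rcases hjk.lt_or_gt with h | h
    · rw [Set.disjoint_left]
      intro y hy hy'
      rw [hmemA] at hy hy'
      exact absurd ((hy.2.trans (hRmono _ _ (by omega))).trans_lt hy'.1) (lt_irrefl _)
    · rw [Set.disjoint_right]
      intro y hy hy'
      rw [hmemA] at hy hy'
      exact absurd ((hy.2.trans (hRmono _ _ (by omega))).trans_lt hy'.1) (lt_irrefl _)
  have hsub : (⋃ k, A k) ⊆ (Metric.closedBall (0 : E) 4)ᶜ := by
    intro y hy
    rcases Set.mem_iUnion.1 hy with ⟨k, hk⟩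
    rw [hmemA] at hk
    simp only [Set.mem_compl_iff, mem_closedBall_zero_iff, not_le]
    exact lt_of_le_of_lt (hR4 k) hk.1
  have hvol : ∀ k, volume (A k) =
      (ENNReal.ofReal (R (k+1) ^ N) - ENNReal.ofReal (R k ^ N)) * volume (ball (0:E) 1) := by
    intro k
    rw [hA]
    rw [measure_diff (Metric.closedBall_subset_closedBall (hRmono k (k+1) (by omega)))
      measurableSet_closedBall.nullMeasurableSet measure_closedBall_lt_top.ne]
    rw [Measure.addHaar_closedBall _ _ (hRpos _).le, Measure.addHaar_closedBall _ _ (hRpos _).le]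
    rw [finrank_euclideanSpace_fin, ENNReal.sub_mul]
    exact fun _ _ => measure_ball_lt_top.ne
  set c : ℝ≥0∞ := ENNReal.ofReal (1 - (2:ℝ)⁻¹ ^ N) * volume (ball (0:E) 1) with hc
  have hc0 : c ≠ 0 := by
    rw [hc]
    apply mul_ne_zero
    · simp only [ne_eq, ENNReal.ofReal_eq_zero, not_le, sub_pos]
      apply pow_lt_one₀ (by norm_num) (by norm_num) (by omega)
    · exact (measure_ball_pos _ _ one_pos).ne'
  have hterm : ∀ k, c ≤ ∫⁻ y in A k, ENNReal.ofReal (‖y‖ ^ (-(N : ℝ))) := by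
    intro k
    have h1 : ∫⁻ y in A k, ENNReal.ofReal (R (k+1) ^ (-(N : ℝ))) ≤
        ∫⁻ y in A k, ENNReal.ofReal (‖y‖ ^ (-(N : ℝ))) := by
      apply setLIntegral_mono_ae (by fun_prop)
      filter_upwards with y hy
      apply ENNReal.ofReal_le_ofReal
      rw [hmemA] at hy
      exact Real.rpow_le_rpow_of_nonpos (lt_trans (lt_of_lt_of_le (by norm_num) (hR4 k)) hy.1)
        hy.2 (neg_nonpos.2 (Nat.cast_nonneg N))
    refine le_trans ?_ h1
    rw [setLIntegral_const, hvol]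
    rw [← mul_assoc]
    apply mul_le_mul_left
    rw [← ENNReal.ofReal_sub _ (by positivity), ← ENNReal.ofReal_mul (by positivity)]
    apply ENNReal.ofReal_le_ofReal
    have ht : (0:ℝ) < R (k+1) ^ N := by positivity
    rw [Real.rpow_neg (hRpos _).le, Real.rpow_natCast]
    have hhalf : R k = R (k+1) / 2 := by
      rw [hR]; ring
    rw [hhalf, div_pow]
    rw [mul_sub, inv_mul_cancel₀ ht.ne']
    have : (R (k+1) ^ N)⁻¹ * (R (k+1) ^ N / 2 ^ N) = (2:ℝ)⁻¹ ^ N := by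
      field_simp
      rw [← mul_pow]; norm_num
    rw [this]
  rw [eq_top_iff]
  calc (⊤ : ℝ≥0∞) = ∑' _ : ℕ, c := (ENNReal.tsum_const_eq_top_of_ne_zero hc0).symm
    _ ≤ ∑' k, ∫⁻ y in A k, ENNReal.ofReal (‖y‖ ^ (-(N : ℝ))) := ENNReal.tsum_le_tsum hterm
    _ = ∫⁻ y in ⋃ k, A k, ENNReal.ofReal (‖y‖ ^ (-(N : ℝ))) := (lintegral_iUnion hAm hdisj _).symm
    _ ≤ _ := lintegral_mono_set hsub

theorem stmt_16 (N : ℕ) (s p β : ℝ) (hp : 1 < p) (hs0 : 0 < s) (hs1 : s < 1)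
    (hps : p * s < N) (hβ : β < -(p * s))
    (φ : EuclideanSpace ℝ (Fin N) → ℝ) (hφ : ContDiff ℝ (⊤ : ℕ∞) φ) (hφs : HasCompactSupport φ)
    (hφsupp : tsupport φ ⊆ Metric.ball (0 : EuclideanSpace ℝ (Fin N)) 4)
    (hφ01 : ∀ x, 0 ≤ φ x ∧ φ x ≤ 1)
    (hφ1 : ∀ x ∈ Metric.ball (0 : EuclideanSpace ℝ (Fin N)) 1, φ x = 1) :
    (∫⁻ x, ∫⁻ y, ENNReal.ofReal
        (|φ x - φ y| ^ p / (‖x - y‖ ^ ((N : ℝ) + p * s) * ‖x‖ ^ β * ‖y‖ ^ β))) = ⊤ := by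
  have hp0 : (0:ℝ) < p := lt_trans one_pos hp
  have hps0 : 0 < p * s := mul_pos hp0 hs0
  have hN : 0 < N := by exact_mod_cast hps0.trans hps
  have : Nonempty (Fin N) := ⟨⟨0, hN⟩⟩
  haveI : Nontrivial (EuclideanSpace ℝ (Fin N)) :=
    inferInstanceAs (Nontrivial (PiLp 2 fun _ : Fin N => ℝ))
  set a : ℝ := (N:ℝ) + p * s with ha
  have ha0 : 0 < a := by positivity
  have key : ∀ x : EuclideanSpace ℝ (Fin N), x ∈ Metric.ball (0 : EuclideanSpace ℝ (Fin N)) 1 → x ≠ 0 →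
      ∫⁻ y, ENNReal.ofReal (|φ x - φ y| ^ p / (‖x - y‖ ^ a * ‖x‖ ^ β * ‖y‖ ^ β)) = ⊤ := by
    intro x hx hx0
    have hx1 : ‖x‖ < 1 := mem_ball_zero_iff.1 hx
    have hxn : (0:ℝ) < ‖x‖ := norm_pos_iff.2 hx0
    set C : ℝ := ((2:ℝ) ^ a * ‖x‖ ^ β)⁻¹ with hC
    have hC0 : 0 < C := by
      rw [hC]
      positivity
    have hbound : ∀ y ∈ (Metric.closedBall (0 : EuclideanSpace ℝ (Fin N)) 4)ᶜ,
        ENNReal.ofReal C * ENNReal.ofReal (‖y‖ ^ (-(N:ℝ))) ≤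
          ENNReal.ofReal (|φ x - φ y| ^ p / (‖x - y‖ ^ a * ‖x‖ ^ β * ‖y‖ ^ β)) := by
      intro y hy
      have hy4 : 4 < ‖y‖ := by
        simpa [mem_closedBall_zero_iff, not_le] using hy
      have hyn : (0:ℝ) < ‖y‖ := by linarith
      have hφy : φ y = 0 := by
        apply image_eq_zero_of_notMem_tsupport
        intro h
        have := mem_ball_zero_iff.1 (hφsupp h)
        linarith
      have hφx : φ x = 1 := hφ1 x hx
      rw [hφx, hφy, sub_zero, abs_one, Real.one_rpow]
      rw [← ENNReal.ofReal_mul hC0.le]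
      apply ENNReal.ofReal_le_ofReal
      have hxy0 : (0:ℝ) < ‖x - y‖ := by
        have h1 : ‖y‖ - ‖x‖ ≤ ‖x - y‖ := by
          have := norm_sub_norm_le y x
          rw [show ‖y - x‖ = ‖x - y‖ from norm_sub_rev y x] at this
          linarith
        linarith
      have hxy2 : ‖x - y‖ ≤ 2 * ‖y‖ := by
        have := norm_sub_le x y
        linarith
      have hD : (0:ℝ) < ‖x - y‖ ^ a * ‖x‖ ^ β * ‖y‖ ^ β := by positivity
      rw [le_div_iff₀ hD]
      have e1 : C * ‖y‖ ^ (-(N:ℝ)) * (‖x - y‖ ^ a * ‖x‖ ^ β * ‖y‖ ^ β)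
          = (‖x - y‖ / 2) ^ a * (‖y‖ ^ (-(N:ℝ) + β)) := by
        rw [Real.div_rpow hxy0.le (by norm_num : (0:ℝ) ≤ 2), Real.rpow_add hyn, hC]
        have h2a : (0:ℝ) < (2:ℝ) ^ a := by positivity
        have hxb : (0:ℝ) < ‖x‖ ^ β := Real.rpow_pos_of_pos hxn β
        field_simp
      rw [e1]
      have e2 : (‖x - y‖ / 2) ^ a ≤ ‖y‖ ^ a :=
        Real.rpow_le_rpow (by positivity) (by linarith) ha0.le
      calc (‖x - y‖ / 2) ^ a * ‖y‖ ^ (-(N:ℝ) + β)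
          ≤ ‖y‖ ^ a * ‖y‖ ^ (-(N:ℝ) + β) := by
            apply mul_le_mul_of_nonneg_right e2 (Real.rpow_nonneg hyn.le _)
        _ = ‖y‖ ^ (p * s + β) := by
            rw [← Real.rpow_add hyn, ha]
            ring_nf
        _ ≤ 1 := Real.rpow_le_one_of_one_le_of_nonpos (by linarith) (by linarith)
    rw [eq_top_iff]
    calc (⊤:ℝ≥0∞) = ENNReal.ofReal C * ⊤ := by
          rw [ENNReal.mul_top (by simp [ENNReal.ofReal_eq_zero, not_le, hC0])]
      _ = ENNReal.ofReal C * ∫⁻ y in (Metric.closedBall (0 : EuclideanSpace ℝ (Fin N)) 4)ᶜ,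
            ENNReal.ofReal (‖y‖ ^ (-(N:ℝ))) := by rw [aux_div N hN]
      _ = ∫⁻ y in (Metric.closedBall (0 : EuclideanSpace ℝ (Fin N)) 4)ᶜ,
            ENNReal.ofReal C * ENNReal.ofReal (‖y‖ ^ (-(N:ℝ))) :=
          (lintegral_const_mul' _ _ ENNReal.ofReal_ne_top).symm
      _ ≤ ∫⁻ y in (Metric.closedBall (0 : EuclideanSpace ℝ (Fin N)) 4)ᶜ,
            ENNReal.ofReal (|φ x - φ y| ^ p / (‖x - y‖ ^ a * ‖x‖ ^ β * ‖y‖ ^ β)) := by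
          apply lintegral_mono_ae
          filter_upwards [ae_restrict_mem measurableSet_closedBall.compl] with y hy
          exact hbound y hy
      _ ≤ _ := setLIntegral_le_lintegral _ _
  rw [eq_top_iff]
  have h0 : ∀ᵐ x : EuclideanSpace ℝ (Fin N) ∂(volume.restrict (Metric.ball (0 : EuclideanSpace ℝ (Fin N)) 1)), x ≠ 0 := by
    apply Filter.Eventually.filter_mono (ae_mono Measure.restrict_le_self)
    refine ae_iff.mpr ?_
    have : {x : EuclideanSpace ℝ (Fin N) | ¬x ≠ 0} = {0} := by ext z; simp
    rw [this, measure_singleton]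
  have h2 : ∫⁻ x in Metric.ball (0 : EuclideanSpace ℝ (Fin N)) 1,
      (∫⁻ y, ENNReal.ofReal (|φ x - φ y| ^ p / (‖x - y‖ ^ a * ‖x‖ ^ β * ‖y‖ ^ β))) = ⊤ := by
    have hcongr : ∀ᵐ x ∂(volume.restrict (Metric.ball (0 : EuclideanSpace ℝ (Fin N)) 1)),
        (∫⁻ y, ENNReal.ofReal (|φ x - φ y| ^ p / (‖x - y‖ ^ a * ‖x‖ ^ β * ‖y‖ ^ β)))
          = (⊤:ℝ≥0∞) := by
      filter_upwards [ae_restrict_mem measurableSet_ball, h0] with x hx hx0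
      exact key x hx hx0
    rw [lintegral_congr_ae hcongr, lintegral_const, Measure.restrict_apply_univ,
      ENNReal.top_mul]
    · have : Nonempty (Fin N) := ⟨⟨0, hN⟩⟩
      exact (measure_ball_pos _ _ one_pos).ne'
  calc (⊤:ℝ≥0∞) = _ := h2.symm
    _ ≤ _ := setLIntegral_le_lintegral _ _
end
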